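/- For every real λ > 0 and integers n, m, l with 1 ≤ l < m ≤ n, one has s_n(λ) · s_{n−m}(λ) < s_{n−l}(λ) · s_{n−m+l}(λ). -/

import Mathlib

/-- The `n`-th partial sum of the Taylor series of the exponential function. -/
noncomputable def s (n : ℕ) (a : ℝ) : ℝ :=
  ∑ j ∈ Finset.range (n + 1), a ^ j / (Nat.factorial j : ℝ)

/-!
The sequence `k ↦ s k a` is strictly log-concave: comparing the terms
`a^(k+2)/(k+2)! · a^j/j!` and `a^(k+1)/(k+1)! · a^(j+1)/(j+1)!` for `j ≤ k` gives
`s (k+2) · s k < s (k+1)^2`. Hence the ratios `s (k+1) / s k` decrease strictly, and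
`s n / s (n-l)` and `s (n-m+l) / s (n-m)` are products of `l` consecutive ratios, the first
starting further out.
-/

open Finset
open scoped Nat

theorem div_lt_div_of_strictAnti_ratio {f : ℕ → ℝ} (hpos : ∀ k, 0 < f k)
    (hf : StrictAnti fun k ↦ f (k + 1) / f k) {u v j : ℕ} (huv : u < v) (hj : 0 < j) :
    f (v + j) / f v < f (u + j) / f u := by
  induction j, hj using Nat.le_induction with
  | base => exact hf huv
  | succ j _ ih =>
    calc f (v + (j + 1)) / f v = f (v + j + 1) / f (v + j) * (f (v + j) / f v) :=
          (div_mul_div_cancel₀ (hpos _).ne').symm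
      _ < f (u + j + 1) / f (u + j) * (f (u + j) / f u) :=
          mul_lt_mul'' (hf (by omega)) ih (div_pos (hpos _) (hpos _)).le
            (div_pos (hpos _) (hpos _)).le
      _ = f (u + (j + 1)) / f u := div_mul_div_cancel₀ (hpos _).ne'

section PartialSums

variable {a : ℝ}

theorem s_pos (ha : 0 < a) (n : ℕ) : 0 < s n a :=
  sum_pos (fun _ _ ↦ by positivity) nonempty_range_add_one

theorem s_succ (n : ℕ) (a : ℝ) : s (n + 1) a = s n a + a ^ (n + 1) / (n + 1)! :=
  sum_range_succ _ _

theorem pow_div_factorial_succ (a : ℝ) (n : ℕ) :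
    a ^ (n + 1) / ((n + 1)! : ℝ) = a ^ n / n ! * (a / (n + 1)) := by
  push_cast [Nat.factorial_succ]
  field_simp
  ring

theorem pow_div_factorial_mul_s_lt (ha : 0 < a) (k : ℕ) :
    a ^ (k + 2) / (k + 2)! * s k a < a ^ (k + 1) / (k + 1)! * s (k + 1) a := by
  have hterm : ∀ j ∈ range (k + 1), a ^ (k + 2) / (k + 2)! * (a ^ j / j !)
      < a ^ (k + 1) / (k + 1)! * (a ^ (j + 1) / (j + 1)!) := by
    intro j hj
    have hjk : (j : ℝ) + 1 < (k + 1 : ℕ) + 1 := by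
      exact_mod_cast Nat.succ_lt_succ (mem_range.mp hj)
    rw [pow_div_factorial_succ a (k + 1), pow_div_factorial_succ a j]
    have hfactor : a / ((k + 1 : ℕ) + 1) < a / (j + 1) :=
      div_lt_div_of_pos_left ha (by positivity) hjk
    have hcommon : 0 < a ^ (k + 1) / ((k + 1)! : ℝ) * (a ^ j / j !) := by positivity
    nlinarith
  have hshift : s (k + 1) a = ∑ j ∈ range (k + 1), a ^ (j + 1) / (j + 1)! + 1 := by
    simp [s, sum_range_succ' _ (k + 1)]
  calc a ^ (k + 2) / (k + 2)! * s k a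
      < a ^ (k + 1) / (k + 1)! * ∑ j ∈ range (k + 1), a ^ (j + 1) / (j + 1)! := by
        rw [s, mul_sum, mul_sum]
        exact sum_lt_sum_of_nonempty nonempty_range_add_one hterm
    _ ≤ a ^ (k + 1) / (k + 1)! * s (k + 1) a := by
        rw [hshift]
        gcongr
        linarith

theorem s_mul_s_lt_sq (ha : 0 < a) (k : ℕ) : s (k + 2) a * s k a < s (k + 1) a ^ 2 := by
  have h := pow_div_factorial_mul_s_lt ha k
  rw [s_succ (k + 1), sq]
  nth_rw 3 [s_succ k]
  linarith

theorem strictAnti_s_succ_div_s (ha : 0 < a) : StrictAnti fun k ↦ s (k + 1) a / s k a := by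
  refine strictAnti_nat_of_succ_lt fun k ↦ ?_
  rw [div_lt_div_iff₀ (s_pos ha _) (s_pos ha _), ← sq]
  exact s_mul_s_lt_sq ha k

end PartialSums

theorem stmt_2 (a : ℝ) (ha : 0 < a) (n m l : ℕ)
    (hl : 1 ≤ l) (hlm : l < m) (hmn : m ≤ n) :
    s n a * s (n - m) a < s (n - l) a * s (n - m + l) a := by
  have h := div_lt_div_of_strictAnti_ratio (s_pos ha) (strictAnti_s_succ_div_s ha)
    (u := n - m) (v := n - l) (j := l) (by omega) hl
  rw [Nat.sub_add_cancel (by omega : l ≤ n),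
    div_lt_div_iff₀ (s_pos ha _) (s_pos ha _)] at h
  linarith
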